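/- Let 1 ≤ p < ∞. If Q : G → X is a continuous n-linear operator between Banach spaces (i.e., Q : X_1 × ⋯ × X_n → X is continuous n-linear) and u : X → Y is an absolutely p-summing linear operator, then the composition u ∘ Q : X_1 × ⋯ × X_n → Y is a factorable strongly p-summing n-linear operator with ‖u ∘ Q‖_{FSt,p} ≤ π_p(u) · ‖Q‖. -/

import Mathlib

open scoped BigOperators
open MeasureTheory

noncomputable section

section Defs

variable (𝕜 : Type*) [RCLike 𝕜]

section Multi

variable {n : ℕ} {X : Fin n → Type*} {Y : Type*}
  [∀ k, NormedAddCommGroup (X k)] [∀ k, NormedSpace 𝕜 (X k)]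
  [NormedAddCommGroup Y] [NormedSpace 𝕜 Y]

/-- `C` witnesses the defining inequality of factorable strongly `p`-summing
multilinear operators. -/
def FactStronglySummingBound (p : ℝ) (T : ContinuousMultilinearMap 𝕜 X Y) (C : ℝ) : Prop :=
  0 ≤ C ∧ ∀ (m₁ m₂ : ℕ) (x : Fin m₁ → Fin m₂ → (∀ k, X k)) (lam : Fin m₁ → Fin m₂ → 𝕜),
    (∑ j, ‖∑ i, lam j i • T (x j i)‖ ^ p) ^ (1 / p) ≤
      C * ⨆ φ : {φ : ContinuousMultilinearMap 𝕜 X 𝕜 // ‖φ‖ ≤ 1},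
        (∑ j, ‖∑ i, lam j i • φ.1 (x j i)‖ ^ p) ^ (1 / p)

/-- Factorable strongly `p`-summing continuous multilinear operators. -/
def FactStronglySumming (p : ℝ) (T : ContinuousMultilinearMap 𝕜 X Y) : Prop :=
  ∃ C, FactStronglySummingBound 𝕜 p T C

/-- The factorable strongly `p`-summing norm `‖T‖_{FSt,p}` (the least admissible constant). -/
def fstMultiNorm (p : ℝ) (T : ContinuousMultilinearMap 𝕜 X Y) : ℝ :=
  sInf {C | FactStronglySummingBound 𝕜 p T C}

/-- Strongly `p`-summing continuous multilinear operators (Dimant). -/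
def StronglySumming (p : ℝ) (T : ContinuousMultilinearMap 𝕜 X Y) : Prop :=
  ∃ C : ℝ, 0 ≤ C ∧ ∀ (m : ℕ) (x : Fin m → (∀ k, X k)),
    (∑ j, ‖T (x j)‖ ^ p) ^ (1 / p) ≤
      C * ⨆ φ : {φ : ContinuousMultilinearMap 𝕜 X 𝕜 // ‖φ‖ ≤ 1},
        (∑ j, ‖φ.1 (x j)‖ ^ p) ^ (1 / p)

/-- Factorable `p`-dominated continuous multilinear operators. -/
def FactorablePDominated (p : ℝ) (T : ContinuousMultilinearMap 𝕜 X Y) : Prop :=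
  ∃ C : ℝ, 0 ≤ C ∧ ∀ (m₁ m₂ : ℕ) (x : Fin m₁ → Fin m₂ → (∀ k, X k))
    (lam : Fin m₁ → Fin m₂ → 𝕜),
    (∑ j, ‖∑ i, lam j i • T (x j i)‖ ^ p) ^ (1 / p) ≤
      C * ⨆ φ : ∀ k, {f : X k →L[𝕜] 𝕜 // ‖f‖ ≤ 1},
        (∑ j, ‖∑ i, lam j i • ∏ k, (φ k).1 (x j i k)‖ ^ p) ^ (1 / p)

/-- `p`-semi-integral continuous multilinear operators. -/
def PSemiIntegral (p : ℝ) (T : ContinuousMultilinearMap 𝕜 X Y) : Prop :=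
  ∃ C : ℝ, 0 ≤ C ∧ ∀ (m : ℕ) (x : Fin m → (∀ k, X k)),
    (∑ j, ‖T (x j)‖ ^ p) ^ (1 / p) ≤
      C * ⨆ φ : ∀ k, {f : X k →L[𝕜] 𝕜 // ‖f‖ ≤ 1},
        (∑ j, ‖∏ k, (φ k).1 (x j k)‖ ^ p) ^ (1 / p)

end Multi

section Poly

variable {X Y : Type*} [NormedAddCommGroup X] [NormedSpace 𝕜 X]
  [NormedAddCommGroup Y] [NormedSpace 𝕜 Y]

/-- `P` is a continuous `m`-homogeneous polynomial: the diagonal of a continuous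
`m`-linear map. -/
def IsHomogPoly (m : ℕ) (P : X → Y) : Prop :=
  ∃ T : ContinuousMultilinearMap 𝕜 (fun _ : Fin m => X) Y, ∀ x, P x = T (fun _ => x)

/-- Sup norm of a (homogeneous polynomial) map on the closed unit ball. -/
def polyNorm (P : X → Y) : ℝ :=
  ⨆ x : {x : X // ‖x‖ ≤ 1}, ‖P x.1‖

/-- `C` witnesses the defining inequality of factorable strongly `p`-summing
`m`-homogeneous polynomials. -/
def FactStronglySummingPolyBound (m : ℕ) (p : ℝ) (P : X → Y) (C : ℝ) : Prop :=
  0 ≤ C ∧ ∀ (m₁ m₂ : ℕ) (x : Fin m₁ → Fin m₂ → X) (lam : Fin m₁ → Fin m₂ → 𝕜),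
    (∑ j, ‖∑ i, lam j i • P (x j i)‖ ^ p) ^ (1 / p) ≤
      C * ⨆ q : {q : X → 𝕜 // IsHomogPoly 𝕜 m q ∧ polyNorm q ≤ 1},
        (∑ j, ‖∑ i, lam j i • q.1 (x j i)‖ ^ p) ^ (1 / p)

/-- Factorable strongly `p`-summing `m`-homogeneous polynomials. -/
def FactStronglySummingPoly (m : ℕ) (p : ℝ) (P : X → Y) : Prop :=
  IsHomogPoly 𝕜 m P ∧ ∃ C, FactStronglySummingPolyBound 𝕜 m p P C

/-- The factorable strongly `p`-summing norm `‖P‖_{FSt,p}` of a polynomial. -/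
def fstPolyNorm (m : ℕ) (p : ℝ) (P : X → Y) : ℝ :=
  sInf {C | FactStronglySummingPolyBound 𝕜 m p P C}

/-- `C` witnesses the defining inequality of absolutely `p`-summing linear operators. -/
def AbsSummingBound (p : ℝ) (u : X →L[𝕜] Y) (C : ℝ) : Prop :=
  0 ≤ C ∧ ∀ (m : ℕ) (x : Fin m → X),
    (∑ j, ‖u (x j)‖ ^ p) ^ (1 / p) ≤
      C * ⨆ φ : {φ : X →L[𝕜] 𝕜 // ‖φ‖ ≤ 1}, (∑ j, ‖φ.1 (x j)‖ ^ p) ^ (1 / p)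

/-- Absolutely `p`-summing continuous linear operators. -/
def AbsolutelySumming (p : ℝ) (u : X →L[𝕜] Y) : Prop :=
  ∃ C, AbsSummingBound 𝕜 p u C

/-- The absolutely `p`-summing norm `π_p(u)` (the least admissible constant). -/
def piSummingNorm (p : ℝ) (u : X →L[𝕜] Y) : ℝ :=
  sInf {C | AbsSummingBound 𝕜 p u C}

end Poly

end Defs

end

/-! Since `u` is linear, `u (∑ᵢ λᵢ Q xᵢ) = ∑ᵢ λᵢ (u ∘ Q) xᵢ`, so the `π_p(u)`-inequality for the
vectors `yⱼ = ∑ᵢ λⱼⁱ Q xⱼⁱ` bounds the left side of the `FSt,p`-inequality for `u ∘ Q`. Its right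
side involves `ψ (yⱼ) = ∑ᵢ λⱼⁱ (ψ ∘ Q) xⱼⁱ` for `ψ` in the dual unit ball, and `ψ ∘ Q` is an
`n`-linear functional of norm at most `‖Q‖`; rescaling it into the unit ball costs the factor `‖Q‖`.
Finally, the admissible constants for `u` form a closed set, so `π_p(u)` is itself admissible. -/

section LpSums

variable {ι : Type*} [Fintype ι] {p : ℝ}

theorem sum_rpow_rpow_one_div_le (hp : 0 ≤ p) {a b : ι → ℝ} (ha : ∀ j, 0 ≤ a j)
    (hab : ∀ j, a j ≤ b j) : (∑ j, a j ^ p) ^ (1 / p) ≤ (∑ j, b j ^ p) ^ (1 / p) :=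
  Real.rpow_le_rpow (Finset.sum_nonneg fun j _ => Real.rpow_nonneg (ha j) _)
    (Finset.sum_le_sum fun j _ => Real.rpow_le_rpow (ha j) (hab j) hp) (by positivity)

theorem sum_norm_smul_rpow_rpow_one_div {𝕜 E : Type*} [NormedField 𝕜]
    [SeminormedAddCommGroup E] [NormedSpace 𝕜 E] (hp : p ≠ 0) (c : 𝕜) (v : ι → E) :
    (∑ j, ‖c • v j‖ ^ p) ^ (1 / p) = ‖c‖ * (∑ j, ‖v j‖ ^ p) ^ (1 / p) := by
  simp_rw [norm_smul, Real.mul_rpow (norm_nonneg _) (norm_nonneg _), ← Finset.mul_sum]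
  rw [Real.mul_rpow (by positivity) (by positivity), ← Real.rpow_mul (norm_nonneg _),
    mul_one_div_cancel hp, Real.rpow_one]

end LpSums

section FactorableSums

variable {𝕜 : Type*} [RCLike 𝕜] {n : ℕ} {G : Fin n → Type*} {E : Type*}
  [∀ k, NormedAddCommGroup (G k)] [∀ k, NormedSpace 𝕜 (G k)]
  [NormedAddCommGroup E] [NormedSpace 𝕜 E] {p : ℝ} {m₁ m₂ : ℕ}

/-- Both sides of the inequality in `FactStronglySummingBound` are built from this quantity. -/
noncomputable def fstSum (p : ℝ) (x : Fin m₁ → Fin m₂ → ∀ k, G k) (lam : Fin m₁ → Fin m₂ → 𝕜)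
    (T : ContinuousMultilinearMap 𝕜 G E) : ℝ :=
  (∑ j, ‖∑ i, lam j i • T (x j i)‖ ^ p) ^ (1 / p)

variable (x : Fin m₁ → Fin m₂ → ∀ k, G k) (lam : Fin m₁ → Fin m₂ → 𝕜)

theorem fstSum_nonneg (T : ContinuousMultilinearMap 𝕜 G E) : 0 ≤ fstSum p x lam T := by
  unfold fstSum
  positivity

theorem fstSum_smul (hp : p ≠ 0) (c : 𝕜) (T : ContinuousMultilinearMap 𝕜 G E) :
    fstSum p x lam (c • T) = ‖c‖ * fstSum p x lam T := by
  unfold fstSum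
  rw [← sum_norm_smul_rpow_rpow_one_div hp c]
  simp_rw [smul_apply, smul_comm (lam _ _) c, ← Finset.smul_sum]

theorem bddAbove_range_fstSum (hp : 0 ≤ p) :
    BddAbove (Set.range fun φ : {φ : ContinuousMultilinearMap 𝕜 G E // ‖φ‖ ≤ 1} =>
      fstSum p x lam φ.1) := by
  refine ⟨(∑ j, (∑ i, ‖lam j i‖ * ∏ k, ‖x j i k‖) ^ p) ^ (1 / p), ?_⟩
  rintro _ ⟨φ, rfl⟩
  refine sum_rpow_rpow_one_div_le hp (fun _ => norm_nonneg _) fun j => ?_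
  refine (norm_sum_le _ _).trans (Finset.sum_le_sum fun i _ => ?_)
  rw [norm_smul]
  refine mul_le_mul_of_nonneg_left ((φ.1.le_opNorm _).trans ?_) (norm_nonneg _)
  exact mul_le_of_le_one_left (by positivity) φ.2

theorem fstSum_le_opNorm_mul_iSup (hp : 0 < p) (T : ContinuousMultilinearMap 𝕜 G E) :
    fstSum p x lam T ≤
      ‖T‖ * ⨆ φ : {φ : ContinuousMultilinearMap 𝕜 G E // ‖φ‖ ≤ 1}, fstSum p x lam φ.1 := by
  rcases eq_or_ne T 0 with rfl | hT
  · have h_zero : fstSum p x lam (0 : ContinuousMultilinearMap 𝕜 G E) = 0 := by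
      rw [← zero_smul 𝕜 (0 : ContinuousMultilinearMap 𝕜 G E), fstSum_smul x lam hp.ne', norm_zero,
        zero_mul]
    rw [h_zero]
    exact mul_nonneg (norm_nonneg _) (Real.iSup_nonneg fun φ => fstSum_nonneg x lam φ.1)
  have hT_pos : ‖T‖ ≠ 0 := norm_ne_zero_iff.2 hT
  set φ₀ := ((‖T‖⁻¹ : ℝ) : 𝕜) • T
  have hφ₀ : ‖φ₀‖ ≤ 1 := by
    rw [norm_smul, RCLike.norm_ofReal, abs_inv, abs_norm, inv_mul_cancel₀ hT_pos]
  have hT_eq : T = ((‖T‖ : ℝ) : 𝕜) • φ₀ := by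
    rw [smul_smul, ← RCLike.ofReal_mul, mul_inv_cancel₀ hT_pos, RCLike.ofReal_one, one_smul]
  calc fstSum p x lam T = ‖T‖ * fstSum p x lam φ₀ := by
        conv_lhs => rw [hT_eq, fstSum_smul x lam hp.ne', RCLike.norm_ofReal, abs_norm]
    _ ≤ _ := mul_le_mul_of_nonneg_left
        (le_ciSup (bddAbove_range_fstSum x lam hp.le) ⟨φ₀, hφ₀⟩) (norm_nonneg _)

end FactorableSums

section SummingConstants

variable {𝕜 : Type*} [RCLike 𝕜] {X Y : Type*} [NormedAddCommGroup X] [NormedSpace 𝕜 X]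
  [NormedAddCommGroup Y] [NormedSpace 𝕜 Y] {p : ℝ}

theorem isClosed_setOf_absSummingBound (p : ℝ) (u : X →L[𝕜] Y) :
    IsClosed {C | AbsSummingBound 𝕜 p u C} := by
  simp only [AbsSummingBound, Set.ofPred_and, Set.ofPred_forall]
  exact (isClosed_le continuous_const continuous_id).inter <|
    isClosed_iInter fun _ => isClosed_iInter fun _ =>
      isClosed_le continuous_const (continuous_id.mul continuous_const)

theorem AbsolutelySumming.absSummingBound_piSummingNorm {u : X →L[𝕜] Y}
    (hu : AbsolutelySumming 𝕜 p u) : AbsSummingBound 𝕜 p u (piSummingNorm 𝕜 p u) :=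
  (isClosed_setOf_absSummingBound p u).csInf_mem hu ⟨0, fun _ hC => hC.1⟩

theorem fstMultiNorm_le {n : ℕ} {G : Fin n → Type*} [∀ k, NormedAddCommGroup (G k)]
    [∀ k, NormedSpace 𝕜 (G k)] {T : ContinuousMultilinearMap 𝕜 G Y} {C : ℝ}
    (h : FactStronglySummingBound 𝕜 p T C) : fstMultiNorm 𝕜 p T ≤ C :=
  csInf_le ⟨0, fun _ hC => hC.1⟩ h

theorem AbsSummingBound.factStronglySummingBound_comp {n : ℕ} {G : Fin n → Type*}
    [∀ k, NormedAddCommGroup (G k)] [∀ k, NormedSpace 𝕜 (G k)] (hp : 0 < p)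
    {u : X →L[𝕜] Y} {C : ℝ} (hC : AbsSummingBound 𝕜 p u C) (Q : ContinuousMultilinearMap 𝕜 G X) :
    FactStronglySummingBound 𝕜 p (u.compContinuousMultilinearMap Q) (C * ‖Q‖) := by
  refine ⟨mul_nonneg hC.1 (norm_nonneg Q), fun m₁ m₂ x lam => ?_⟩
  set y : Fin m₁ → X := fun j => ∑ i, lam j i • Q (x j i)
  have h_sup_nonneg : 0 ≤ ⨆ φ : {φ : ContinuousMultilinearMap 𝕜 G 𝕜 // ‖φ‖ ≤ 1},
      fstSum p x lam φ.1 := Real.iSup_nonneg fun φ => fstSum_nonneg x lam φ.1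
  have h_dual : ∀ ψ : {ψ : X →L[𝕜] 𝕜 // ‖ψ‖ ≤ 1}, (∑ j, ‖ψ.1 (y j)‖ ^ p) ^ (1 / p) ≤
      ‖Q‖ * ⨆ φ : {φ : ContinuousMultilinearMap 𝕜 G 𝕜 // ‖φ‖ ≤ 1}, fstSum p x lam φ.1 := by
    intro ψ
    calc (∑ j, ‖ψ.1 (y j)‖ ^ p) ^ (1 / p)
        = fstSum p x lam (ψ.1.compContinuousMultilinearMap Q) := by simp [fstSum, y]
      _ ≤ ‖ψ.1.compContinuousMultilinearMap Q‖ * _ := fstSum_le_opNorm_mul_iSup x lam hp _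
      _ ≤ ‖Q‖ * _ := mul_le_mul_of_nonneg_right
          ((ψ.1.norm_compContinuousMultilinearMap_le Q).trans
            (mul_le_of_le_one_left (norm_nonneg _) ψ.2)) h_sup_nonneg
  calc (∑ j, ‖∑ i, lam j i • u.compContinuousMultilinearMap Q (x j i)‖ ^ p) ^ (1 / p)
      = (∑ j, ‖u (y j)‖ ^ p) ^ (1 / p) := by simp [y]
    _ ≤ C * ⨆ ψ : {ψ : X →L[𝕜] 𝕜 // ‖ψ‖ ≤ 1}, (∑ j, ‖ψ.1 (y j)‖ ^ p) ^ (1 / p) := hC.2 m₁ y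
    _ ≤ C * (‖Q‖ * ⨆ φ : {φ : ContinuousMultilinearMap 𝕜 G 𝕜 // ‖φ‖ ≤ 1}, fstSum p x lam φ.1) :=
        mul_le_mul_of_nonneg_left
          (Real.iSup_le h_dual (mul_nonneg (norm_nonneg Q) h_sup_nonneg)) hC.1
    _ = _ := (mul_assoc _ _ _).symm

end SummingConstants

theorem absSumming_comp_multilinear_general
    {𝕜 : Type*} [RCLike 𝕜] {n : ℕ} {G : Fin n → Type*} {X Y : Type*}
    [∀ k, NormedAddCommGroup (G k)] [∀ k, NormedSpace 𝕜 (G k)]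
    [NormedAddCommGroup X] [NormedSpace 𝕜 X]
    [NormedAddCommGroup Y] [NormedSpace 𝕜 Y]
    (p : ℝ) (hp : 1 ≤ p) (Q : ContinuousMultilinearMap 𝕜 G X)
    (u : X →L[𝕜] Y) (hu : AbsolutelySumming 𝕜 p u) :
    FactStronglySumming 𝕜 p (u.compContinuousMultilinearMap Q) ∧
      fstMultiNorm 𝕜 p (u.compContinuousMultilinearMap Q) ≤ piSummingNorm 𝕜 p u * ‖Q‖ := by
  have h_bound := hu.absSummingBound_piSummingNorm.factStronglySummingBound_comp
    (zero_lt_one.trans_le hp) Q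
  exact ⟨⟨_, h_bound⟩, fstMultiNorm_le h_bound⟩

/-- if `Q` is a continuous `n`-linear operator into `X` and `u : X → Y` is
absolutely `p`-summing, then `u ∘ Q` is a factorable strongly `p`-summing `n`-linear
operator with `‖u ∘ Q‖_{FSt,p} ≤ π_p(u) ‖Q‖`. -/
theorem absSumming_comp_multilinear
    {𝕜 : Type*} [RCLike 𝕜] {n : ℕ} {G : Fin n → Type*} {X Y : Type*}
    [∀ k, NormedAddCommGroup (G k)] [∀ k, NormedSpace 𝕜 (G k)] [∀ k, CompleteSpace (G k)]
    [NormedAddCommGroup X] [NormedSpace 𝕜 X] [CompleteSpace X]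
    [NormedAddCommGroup Y] [NormedSpace 𝕜 Y] [CompleteSpace Y]
    (p : ℝ) (hp : 1 ≤ p) (Q : ContinuousMultilinearMap 𝕜 G X)
    (u : X →L[𝕜] Y) (hu : AbsolutelySumming 𝕜 p u) :
    FactStronglySumming 𝕜 p (u.compContinuousMultilinearMap Q) ∧
      fstMultiNorm 𝕜 p (u.compContinuousMultilinearMap Q) ≤ piSummingNorm 𝕜 p u * ‖Q‖ :=
  absSumming_comp_multilinear_general p hp Q u hu
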